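/- arXiv:1602.05467 — 2 statements merged into one kernel-verified Lean document; each statement's English description precedes it below -/
import Mathlib

section
/- Let polynomials p and p̃ of degree d be written in Bernstein-Bézier form with respect to triangles T = ⟨v_1,v_2,v_3⟩ and T̃ = ⟨v_4,v_3,v_2⟩ sharing the edge e = ⟨v_2,v_3⟩, with coefficients c_{ijk} and c̃_{rst}. Then p and p̃ agree on the line through v_2 and v_3 if and only if c̃_{0jk} = c_{0kj} for all j+k = d. -/
/-!
On the shared edge the point `(1 - s) • v₂ + s • v₃` has barycentric coordinates `(0, 1 - s, s)`
with respect to `T` and `(0, s, 1 - s)` with respect to `T̃`. Hence both restrictions are univariate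
Bernstein expansions of degree `d`, with coefficients `c_{0jk}` and `c̃_{0kj}` at `(1 - s)ʲ sᵏ`,
and they agree identically iff these coefficients agree, by linear independence of the Bernstein
polynomials: comparing coefficients of `Xᵏ` in `∑ a_{jk} (1 - X)ʲ Xᵏ` peels them off one by one.
-/

open Finset

namespace Polynomial

theorem eq_zero_of_sum_C_mul_one_sub_X_pow_mul_X_pow_eq_zero {R : Type*} [CommRing R]
    {d : ℕ} {a : ℕ × ℕ → R}
    (h : ∑ jk ∈ antidiagonal d, C (a jk) * (1 - X) ^ jk.1 * X ^ jk.2 = 0) :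
    ∀ jk ∈ antidiagonal d, a jk = 0 := by
  rintro ⟨j, k⟩ hjk
  induction k using Nat.strong_induction_on generalizing j with
  | _ k ih =>
  have hcoeff := congrArg (coeff · k) h
  simp only [finsetSum_coeff, coeff_zero, coeff_mul_X_pow', coeff_C_mul] at hcoeff
  rw [sum_eq_single (j, k) ?_ (absurd hjk)] at hcoeff
  · simpa [coeff_zero_eq_eval_zero] using hcoeff
  rintro ⟨j', k'⟩ hjk' hne
  rw [HasAntidiagonal.mem_antidiagonal] at hjk hjk'
  rcases lt_trichotomy k' k with hlt | rfl | hgt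
  · simp [ih k' hlt j' (HasAntidiagonal.mem_antidiagonal.2 hjk')]
  · exact absurd (by simp; omega) hne
  · simp [hgt.not_ge]

end Polynomial

open Polynomial in
theorem forall_sum_mul_bernstein_eq_iff {R : Type*} [Field R] [CharZero R] {d : ℕ}
    {a b : ℕ × ℕ → R} :
    (∀ s : R, ∑ jk ∈ antidiagonal d, a jk * (d.choose jk.2 * ((1 - s) ^ jk.1 * s ^ jk.2)) =
      ∑ jk ∈ antidiagonal d, b jk * (d.choose jk.2 * ((1 - s) ^ jk.1 * s ^ jk.2))) ↔
      ∀ jk ∈ antidiagonal d, a jk = b jk := by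
  refine ⟨fun h jk hjk => ?_, fun h s => sum_congr rfl fun jk hjk => by rw [h jk hjk]⟩
  have hpoly : ∑ jk ∈ antidiagonal d,
      C ((a jk - b jk) * d.choose jk.2) * (1 - X) ^ jk.1 * X ^ jk.2 = 0 := by
    refine Polynomial.funext fun s => ?_
    simp only [eval_finsetSum, eval_mul, eval_pow, eval_C, eval_sub, eval_one, eval_X, eval_zero]
    rw [← sub_eq_zero.2 (h s), ← sum_sub_distrib]
    exact sum_congr rfl fun _ _ => by ring
  have hchoose : (d.choose jk.2 : R) ≠ 0 := by
    have := HasAntidiagonal.mem_antidiagonal.1 hjk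
    exact_mod_cast (Nat.choose_pos (by omega)).ne'
  exact sub_eq_zero.1 <| (mul_eq_zero.1 <|
    eq_zero_of_sum_C_mul_one_sub_X_pow_mul_X_pow_eq_zero hpoly jk hjk).resolve_right hchoose

theorem AffineIndependent.eq_of_sum_smul_eq {k V ι : Type*} [Ring k] [AddCommGroup V]
    [Module k V] [Fintype ι] {v : ι → V} (hv : AffineIndependent k v) {w w' : ι → k}
    (hw : ∑ i, w i = 1) (hw' : ∑ i, w' i = 1) (h : ∑ i, w i • v i = ∑ i, w' i • v i) :
    w = w' := by
  refine (affineIndependent_iff_eq_of_fintype_affineCombination_eq k v).1 hv w w' hw hw' ?_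
  rwa [univ.affineCombination_eq_linear_combination v w hw,
    univ.affineCombination_eq_linear_combination v w' hw']

theorem Nat.multinomial_univ_cons_zero {n : ℕ} (t : Fin n → ℕ) :
    Nat.multinomial univ (Fin.cons 0 t : Fin (n + 1) → ℕ) = Nat.multinomial univ t := by
  simp [Nat.multinomial, Fin.sum_univ_succ, Fin.prod_univ_succ]

theorem Finset.Nat.sum_antidiagonalTuple_succ_eq_sum_cons_zero {M : Type*} [AddCommMonoid M]
    {n d : ℕ} {f : (Fin (n + 1) → ℕ) → M} (hf : ∀ t, t 0 ≠ 0 → f t = 0) :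
    ∑ t ∈ antidiagonalTuple (n + 1) d, f t = ∑ t ∈ antidiagonalTuple n d, f (Fin.cons 0 t) := by
  rw [← sum_filter_of_ne (p := fun t => t 0 = 0) fun t _ h => by_contra fun h0 => h (hf t h0)]
  refine sum_nbij' Fin.tail (Fin.cons (α := fun _ => ℕ) 0) ?_ ?_ ?_ ?_ ?_
  · intro t ht
    simp only [mem_filter, mem_antidiagonalTuple, Fin.sum_univ_succ] at ht
    simpa [mem_antidiagonalTuple, Fin.tail, ht.2] using ht.1
  · intro t ht
    simp_all [mem_antidiagonalTuple, Fin.sum_univ_succ]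
  · intro t ht
    exact (mem_filter.1 ht).2 ▸ Fin.cons_self_tail t
  · exact fun t _ => Fin.tail_cons _ _
  · intro t ht
    rw [← (mem_filter.1 ht).2, Fin.cons_self_tail]

noncomputable def bernsteinBezier {R : Type*} [CommSemiring R] {n : ℕ} (d : ℕ)
    (c : (Fin n → ℕ) → R) (b : Fin n → R) : R :=
  ∑ t ∈ Finset.Nat.antidiagonalTuple n d, c t * ((Nat.multinomial univ t : R) * ∏ i, b i ^ t i)

theorem bernsteinBezier_cons_zero {R : Type*} [CommSemiring R] {n : ℕ} (d : ℕ)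
    (c : (Fin (n + 1) → ℕ) → R) (b : Fin n → R) :
    bernsteinBezier d c (Matrix.vecCons 0 b) =
      bernsteinBezier d (fun t => c (Matrix.vecCons 0 t)) b := by
  unfold bernsteinBezier Matrix.vecCons
  rw [Finset.Nat.sum_antidiagonalTuple_succ_eq_sum_cons_zero]
  · simp [Fin.prod_univ_succ, Nat.multinomial_univ_cons_zero]
  · intro t ht
    simp [Fin.prod_univ_succ, zero_pow ht]

theorem bernsteinBezier_two {R : Type*} [CommSemiring R] (d : ℕ) (c : (Fin 2 → ℕ) → R)
    (u v : R) :
    bernsteinBezier d c ![u, v] =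
      ∑ jk ∈ antidiagonal d, c ![jk.1, jk.2] * (d.choose jk.2 * (u ^ jk.1 * v ^ jk.2)) := by
  rw [bernsteinBezier, Finset.Nat.antidiagonalTuple_two, sum_map]
  refine sum_congr rfl fun jk hjk => ?_
  have hmult : Nat.multinomial univ ![jk.1, jk.2] = d.choose jk.2 := by
    rw [Nat.multinomial_univ_two, ← Nat.add_choose, HasAntidiagonal.mem_antidiagonal.1 hjk]
  simp [Fin.prod_univ_two, hmult]

/-- C⁰ smoothness condition in Bernstein–Bézier form: polynomials `p` and `p̃`
of degree `d`, written in BB-form with respect to the triangles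
`T = ⟨v₁,v₂,v₃⟩` and `T̃ = ⟨v₄,v₃,v₂⟩` sharing the edge `⟨v₂,v₃⟩`, agree on the
line through `v₂` and `v₃` if and only if `c̃_{0jk} = c_{0kj}` for all
`j+k = d`. -/
theorem bb_c0_smoothness
    (d : ℕ) (v₁ v₂ v₃ v₄ : Fin 2 → ℝ)
    (hT : AffineIndependent ℝ ![v₁, v₂, v₃])
    (hT' : AffineIndependent ℝ ![v₄, v₃, v₂])
    (β β' : (Fin 2 → ℝ) → Fin 3 → ℝ)
    (hβ1 : ∀ x, ∑ i, β x i = 1)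
    (hβ2 : ∀ x, ∑ i, β x i • ![v₁, v₂, v₃] i = x)
    (hβ'1 : ∀ x, ∑ i, β' x i = 1)
    (hβ'2 : ∀ x, ∑ i, β' x i • ![v₄, v₃, v₂] i = x)
    (c c' : (Fin 3 → ℕ) → ℝ)
    (p p' : (Fin 2 → ℝ) → ℝ)
    (hp : ∀ x, p x = ∑ t ∈ Finset.Nat.antidiagonalTuple 3 d,
      c t * ((Nat.multinomial Finset.univ t : ℝ) * ∏ i, β x i ^ t i))
    (hp' : ∀ x, p' x = ∑ t ∈ Finset.Nat.antidiagonalTuple 3 d,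
      c' t * ((Nat.multinomial Finset.univ t : ℝ) * ∏ i, β' x i ^ t i)) :
    (∀ s : ℝ, p ((1 - s) • v₂ + s • v₃) = p' ((1 - s) • v₂ + s • v₃)) ↔
      (∀ j k : ℕ, j + k = d → c' ![0, j, k] = c ![0, k, j]) := by
  have hβ : ∀ s : ℝ, β ((1 - s) • v₂ + s • v₃) = ![0, 1 - s, s] := fun s =>
    hT.eq_of_sum_smul_eq (hβ1 _) (by simp [Fin.sum_univ_three])
      (by rw [hβ2]; simp [Fin.sum_univ_three])
  have hβ' : ∀ s : ℝ, β' ((1 - s) • v₂ + s • v₃) = ![0, s, 1 - s] := fun s =>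
    hT'.eq_of_sum_smul_eq (hβ'1 _) (by simp [Fin.sum_univ_three])
      (by rw [hβ'2]; simp [Fin.sum_univ_three]; module)
  have hp_edge : ∀ s : ℝ, p ((1 - s) • v₂ + s • v₃) = ∑ jk ∈ antidiagonal d,
      c ![0, jk.1, jk.2] * (d.choose jk.2 * ((1 - s) ^ jk.1 * s ^ jk.2)) := fun s => by
    rw [hp, ← bernsteinBezier, hβ, bernsteinBezier_cons_zero, bernsteinBezier_two]
  have hp'_edge : ∀ s : ℝ, p' ((1 - s) • v₂ + s • v₃) = ∑ jk ∈ antidiagonal d,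
      c' ![0, jk.2, jk.1] * (d.choose jk.2 * ((1 - s) ^ jk.1 * s ^ jk.2)) := fun s => by
    rw [hp', ← bernsteinBezier, hβ', bernsteinBezier_cons_zero, bernsteinBezier_two,
      ← Finset.Nat.sum_antidiagonal_swap]
    refine sum_congr rfl fun jk hjk => ?_
    rw [Prod.fst_swap, Prod.snd_swap,
      Nat.choose_symm_of_eq_add (HasAntidiagonal.mem_antidiagonal.1 hjk).symm]
    ring
  simp only [hp_edge, hp'_edge, forall_sum_mul_bernstein_eq_iff, Prod.forall,
    HasAntidiagonal.mem_antidiagonal]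
  exact ⟨fun h j k hjk => (h k j (by omega)).symm, fun h j k hjk => (h k j (by omega)).symm⟩
end

section
/- Let q be a bivariate polynomial and e a subset of its zero set such that ∇q(x) ≠ 0 for all x ∈ e. Write q in BB-form of degree 2 with respect to a triangle ⟨v_1,v_2,v_3⟩ with q(v_2)=q(v_3)=0, coefficients q_{200}=q(v_1), q_{110}, q_{101}, q_{011}, q_{020}=0, q_{002}=0. If v_3 ∈ e, then q_{101} ≠ 0. -/
/-!
At `v₃` the barycentric coordinates are `(0, 0, 1)`, so the product rule gives
`∇q(v₃) = 2 q₁₀₁ ∇b₁ + 2 q₀₁₁ ∇b₂`. The affine function `b₂` vanishes at `v₁` and `v₃`, so `∇b₂`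
annihilates `v₁ - v₃`. If `q₁₀₁ = 0`, then `∇q(v₃)` annihilates both `v₁ - v₃` and the tangent
direction `w`, which span the plane, contradicting `∇q(v₃) ≠ 0`.
-/

open MvPolynomial Finset

noncomputable def gradAt {σ R : Type*} [CommSemiring R] (p : MvPolynomial σ R) (x : σ → R) :
    σ → R :=
  fun i => eval x (pderiv i p)

lemma Finsupp.eq_zero_or_eq_single_of_card_toMultiset_le_one {σ : Type*} {m : σ →₀ ℕ}
    (hm : Multiset.card (Finsupp.toMultiset m) ≤ 1) : m = 0 ∨ ∃ i, m = Finsupp.single i 1 := by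
  classical
  rw [← Finsupp.toMultiset_toFinsupp m]
  rcases Nat.le_one_iff_eq_zero_or_eq_one.mp hm with h | h
  · exact .inl (by simp [Multiset.card_eq_zero.mp h])
  · obtain ⟨i, hi⟩ := Multiset.card_eq_one.mp h
    exact .inr ⟨i, by rw [hi, Multiset.toFinsupp_singleton]⟩

lemma gradAt_add {σ R : Type*} [CommSemiring R] (p q : MvPolynomial σ R) (x : σ → R) :
    gradAt (p + q) x = gradAt p x + gradAt q x := by
  ext; simp [gradAt]

lemma gradAt_C {σ R : Type*} [CommSemiring R] (a : R) (x : σ → R) :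
    gradAt (C a) x = 0 := by
  ext; simp [gradAt]

lemma gradAt_C_mul_X {σ R : Type*} [CommSemiring R] [DecidableEq σ] (a : R) (i : σ) (x : σ → R) :
    gradAt (C a * X i) x = Pi.single i a := by
  ext j; simp [gradAt, pderiv_X, Pi.single_apply, apply_ite (eval x), eq_comm]

lemma eval_eq_eval_add_dotProduct_gradAt {σ R : Type*} [Fintype σ] [CommRing R]
    {p : MvPolynomial σ R} (hp : p.totalDegree ≤ 1) (x y : σ → R) :
    eval x p = eval y p + (x - y) ⬝ᵥ gradAt p y := by
  classical
  rw [p.as_sum]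
  refine Finset.sum_induction _ (fun p => eval x p = eval y p + (x - y) ⬝ᵥ gradAt p y)
    (fun a b ha hb => ?_) (by rw [← C_0, gradAt_C]; simp) (fun m hm => ?_)
  · rw [map_add, map_add, ha, hb, gradAt_add, dotProduct_add]; ring
  · have hcard := (Finset.le_sup (f := fun m => Multiset.card (Finsupp.toMultiset m)) hm).trans
      (p.totalDegree_eq ▸ hp)
    rcases Finsupp.eq_zero_or_eq_single_of_card_toMultiset_le_one hcard with rfl | ⟨i, rfl⟩
    · simp [gradAt_C]
    · simp [← C_mul_X_eq_monomial, gradAt_C_mul_X]; ring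

lemma AffineIndependent.eq_single_of_sum_smul_eq {k E ι : Type*} [Ring k] [AddCommGroup E]
    [Module k E] [Fintype ι] [DecidableEq ι] {v : ι → E} (hv : AffineIndependent k v)
    {w : ι → k} (hw : ∑ i, w i = 1) {j : ι} (h : ∑ i, w i • v i = v j) :
    w = Pi.single j 1 := by
  have hδ : ∑ i, Pi.single (M := fun _ => k) j 1 i = 1 := by simp
  refine (affineIndependent_iff_eq_of_fintype_affineCombination_eq k v).mp hv _ _ hw hδ ?_
  rw [Finset.affineCombination_eq_linear_combination _ _ _ hw,
    Finset.affineCombination_eq_linear_combination _ _ _ hδ, h]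
  simp

lemma eq_zero_of_forall_dotProduct_eq_zero {K n : Type*} [Field K] [Fintype n] [DecidableEq n]
    {r : n → n → K} (hr : LinearIndependent K r) {g : n → K} (hg : ∀ i, r i ⬝ᵥ g = 0) :
    g = 0 := by
  have hinj := Matrix.mulVec_injective_iff_isUnit.mpr
    ((Matrix.linearIndependent_rows_iff_isUnit (A := Matrix.of r)).mp hr)
  exact hinj (by ext i; simpa [Matrix.mulVec] using hg i)

lemma gradAt_bbQuadratic_of_eval_eq_single {σ R : Type*} [CommRing R]
    (b : Fin 3 → MvPolynomial σ R) (c200 c110 c101 c011 : R) {x : σ → R}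
    (hx : (fun i => eval x (b i)) = Pi.single 2 1) :
    gradAt (C c200 * b 0 ^ 2 + C c110 * (C 2 * b 0 * b 1) + C c101 * (C 2 * b 0 * b 2) +
      C c011 * (C 2 * b 1 * b 2)) x =
      (2 * c101) • gradAt (b 0) x + (2 * c011) • gradAt (b 1) x := by
  have hx0 : eval x (b 0) = 0 := congrFun hx 0
  have hx1 : eval x (b 1) = 0 := congrFun hx 1
  have hx2 : eval x (b 2) = 1 := congrFun hx 2
  ext i
  simp [gradAt, hx0, hx1, hx2]
  ring

theorem transversal_coefficient_nonzero_general
    (v : Fin 3 → (Fin 2 → ℝ)) (hT : AffineIndependent ℝ v)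
    (b : Fin 3 → MvPolynomial (Fin 2) ℝ)
    (hdeg : ∀ i, (b i).totalDegree ≤ 1)
    (hsum : ∑ i, b i = 1)
    (hbar : ∀ x : Fin 2 → ℝ, ∑ i, (MvPolynomial.eval x (b i)) • v i = x)
    (q : MvPolynomial (Fin 2) ℝ)
    (q200 q110 q101 q011 : ℝ)
    (hq : q = MvPolynomial.C q200 * (b 0) ^ 2 +
      MvPolynomial.C q110 * (MvPolynomial.C 2 * b 0 * b 1) +
      MvPolynomial.C q101 * (MvPolynomial.C 2 * b 0 * b 2) +
      MvPolynomial.C q011 * (MvPolynomial.C 2 * b 1 * b 2))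
    (e : Set (Fin 2 → ℝ))
    (hgrad : ∀ x ∈ e, (fun i => MvPolynomial.eval x (pderiv i q)) ≠ 0)
    (hv3 : v 2 ∈ e)
    (w : Fin 2 → ℝ)
    (htan : ∑ i, w i * MvPolynomial.eval (v 2) (pderiv i q) = 0)
    (hw : LinearIndependent ℝ ![w, v 0 - v 2]) :
    q101 ≠ 0 := by
  have hvertex (j : Fin 3) : (fun i => eval (v j) (b i)) = Pi.single j 1 :=
    hT.eq_single_of_sum_smul_eq (by simpa using congrArg (eval (v j)) hsum) (hbar (v j))
  intro h101
  have hgrad_q : gradAt q (v 2) = (2 * q011) • gradAt (b 1) (v 2) := by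
    rw [hq, gradAt_bbQuadratic_of_eval_eq_single b _ _ _ _ (hvertex 2), h101]
    simp
  have hb1 : (v 0 - v 2) ⬝ᵥ gradAt (b 1) (v 2) = 0 := by
    have := eval_eq_eval_add_dotProduct_gradAt (hdeg 1) (v 0) (v 2)
    simp only [congrFun (hvertex 0) 1, congrFun (hvertex 2) 1] at this
    simpa using this.symm
  refine hgrad (v 2) hv3
    (eq_zero_of_forall_dotProduct_eq_zero hw (Fin.forall_fin_two.mpr ⟨htan, ?_⟩))
  change (v 0 - v 2) ⬝ᵥ gradAt q (v 2) = 0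
  rw [hgrad_q, dotProduct_smul, hb1, smul_zero]

/-- Let `q` be a quadratic polynomial, written in degree-2 BB-form with respect
to a triangle `⟨v₁,v₂,v₃⟩` with `q(v₂) = q(v₃) = 0` (coefficients
`q₂₀₀ = q(v₁), q₁₁₀, q₁₀₁, q₀₁₁, q₀₂₀ = q₀₀₂ = 0`), and let `e` be a subset of
its zero set with `∇q(x) ≠ 0` for all `x ∈ e`, passing through `v₃` with a
tangent direction `w` not parallel to `v₁ − v₃`. Then `q₁₀₁ ≠ 0`. -/
theorem transversal_coefficient_nonzero
    (v : Fin 3 → (Fin 2 → ℝ)) (hT : AffineIndependent ℝ v)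
    (b : Fin 3 → MvPolynomial (Fin 2) ℝ)
    (hdeg : ∀ i, (b i).totalDegree ≤ 1)
    (hsum : ∑ i, b i = 1)
    (hbar : ∀ x : Fin 2 → ℝ, ∑ i, (MvPolynomial.eval x (b i)) • v i = x)
    (q : MvPolynomial (Fin 2) ℝ)
    (q200 q110 q101 q011 : ℝ)
    (hq : q = MvPolynomial.C q200 * (b 0) ^ 2 +
      MvPolynomial.C q110 * (MvPolynomial.C 2 * b 0 * b 1) +
      MvPolynomial.C q101 * (MvPolynomial.C 2 * b 0 * b 2) +
      MvPolynomial.C q011 * (MvPolynomial.C 2 * b 1 * b 2))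
    (e : Set (Fin 2 → ℝ))
    (he : e ⊆ {x | MvPolynomial.eval x q = 0})
    (hgrad : ∀ x ∈ e, (fun i => MvPolynomial.eval x (pderiv i q)) ≠ 0)
    (hv3 : v 2 ∈ e)
    (w : Fin 2 → ℝ)
    (htan : ∑ i, w i * MvPolynomial.eval (v 2) (pderiv i q) = 0)
    (hw : LinearIndependent ℝ ![w, v 0 - v 2]) :
    q101 ≠ 0 :=
  transversal_coefficient_nonzero_general v hT b hdeg hsum hbar q q200 q110 q101 q011 hq e hgrad hv3
    w htan hw
end
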